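/- Consistency between field typings and session types is preserved by subtyping on the session side: if F is C-consistent with S and S <: S', then F is C-consistent with S'. -/
import Mathlib


/-!
STATEMENT 2: Consistency between field typings and session types is preserved
by subtyping on the session side: if F ⊢_C S and S <: S', then F ⊢_C S'.

Session types here carry concrete method signatures m(T'):T where T, T' range
over the types Null, enumerations and linkthis.  Session subtyping is the
coinductive relation (branches: fewer methods with <:-compatible signatures;
variants: wider label sets), with signature compatibility as in the paper.
The typing judgement for method bodies is abstracted by `Body`; the closure
properties it enjoys in the actual type system (subsumption T-Sub on the
parameter/result, and the rule T-VarF turning an enumerated result into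
linkthis with a variant final field typing) are the hypotheses `hsub`, `hvarf`.
-/

inductive Ty0 : Type where
  | null : Ty0
  | enum (E : List String) : Ty0
  | linkthis : Ty0
deriving DecidableEq

inductive TySub : Ty0 → Ty0 → Prop where
  | null : TySub .null .null
  | enum {E E'} : E ⊆ E' → TySub (.enum E) (.enum E')
  | linkthis : TySub .linkthis .linkthis

inductive Sess : Type where
  | branch : List (String × Ty0 × Ty0 × Sess) → Sess
  | variant : List (String × Sess) → Sess

inductive FieldTyping (Ty : Type) : Type where
  | record : List (String × Ty) → FieldTyping Ty
  | variant : List (String × FieldTyping Ty) → FieldTyping Ty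

/-- <:-compatibility of method signatures, relative to a relation `R` on
session types. -/
def Compat (R : Sess → Sess → Prop) :
    Ty0 × Ty0 × Sess → Ty0 × Ty0 × Sess → Prop :=
  fun a b =>
    TySub b.1 a.1 ∧
      ((TySub a.2.1 b.2.1 ∧ R a.2.2 b.2.2) ∨
       (∃ E, a.2.1 = Ty0.enum E ∧ b.2.1 = Ty0.linkthis ∧
          R (Sess.variant (E.map fun l => (l, a.2.2))) b.2.2))

/-- `R` is a session-subtyping simulation. -/
def IsSessSub (R : Sess → Sess → Prop) : Prop :=
  ∀ S S', R S S' →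
    (∀ ms', S' = Sess.branch ms' →
      ∃ ms, S = Sess.branch ms ∧
        ∀ m T' U' C', (m, T', U', C') ∈ ms' →
          ∃ T U C, (m, T, U, C) ∈ ms ∧ Compat R (T, U, C) (T', U', C')) ∧
    (∀ ls', S' = Sess.variant ls' →
      ∃ ls, S = Sess.variant ls ∧
        ∀ l Sl, (l, Sl) ∈ ls → ∃ Sl', (l, Sl') ∈ ls' ∧ R Sl Sl')

/-- Coinductive session subtyping. -/
def SessSub (S S' : Sess) : Prop := ∃ R, IsSessSub R ∧ R S S'

/-- C-consistency relations, with method signatures m(Tp):Tres. -/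
def IsConsistency {Ty : Type}
    (Body : String → Ty0 → Ty0 → FieldTyping Ty → FieldTyping Ty → Prop)
    (R : FieldTyping Ty → Sess → Prop) : Prop :=
  ∀ F S, R F S →
    (∀ ms, S = Sess.branch ms →
      (∀ ls, F ≠ FieldTyping.variant ls) ∧
      ∀ m Tp Tres S', (m, Tp, Tres, S') ∈ ms →
        ∃ F', Body m Tp Tres F F' ∧ R F' S') ∧
    (∀ ls, S = Sess.variant ls →
      ∃ fs, F = FieldTyping.variant fs ∧
        ∀ l Fl, (l, Fl) ∈ fs → ∃ Sl, (l, Sl) ∈ ls ∧ R Fl Sl)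

def Consistent {Ty : Type}
    (Body : String → Ty0 → Ty0 → FieldTyping Ty → FieldTyping Ty → Prop)
    (F : FieldTyping Ty) (S : Sess) : Prop :=
  ∃ R, IsConsistency Body R ∧ R F S

lemma compat_mono {R R' : Sess → Sess → Prop} (h : ∀ x y, R x y → R' x y)
    {a b} (hc : Compat R a b) : Compat R' a b := by
  obtain ⟨h1, h2⟩ := hc
  refine ⟨h1, ?_⟩
  rcases h2 with ⟨hu, hr⟩ | ⟨E, hE, hE', hr⟩
  · exact Or.inl ⟨hu, h _ _ hr⟩
  · exact Or.inr ⟨E, hE, hE', h _ _ hr⟩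

lemma isSessSub_sessSub : IsSessSub SessSub := by
  intro S S' ⟨R, hR, hFS⟩
  obtain ⟨h1, h2⟩ := hR S S' hFS
  constructor
  · intro ms' hms'
    obtain ⟨ms, hms, hb⟩ := h1 ms' hms'
    refine ⟨ms, hms, fun m T' U' C' hmem => ?_⟩
    obtain ⟨T, U, C, hmem', hc⟩ := hb m T' U' C' hmem
    exact ⟨T, U, C, hmem', compat_mono (fun x y hxy => ⟨R, hR, hxy⟩) hc⟩
  · intro ls' hls'
    obtain ⟨ls, hls, hv⟩ := h2 ls' hls'
    refine ⟨ls, hls, fun l Sl hmem => ?_⟩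
    obtain ⟨Sl', hmem', hr⟩ := hv l Sl hmem
    exact ⟨Sl', hmem', R, hR, hr⟩

lemma isConsistency_consistent {Ty : Type}
    (Body : String → Ty0 → Ty0 → FieldTyping Ty → FieldTyping Ty → Prop) :
    IsConsistency Body (Consistent Body) := by
  intro F S ⟨R, hR, hFS⟩
  obtain ⟨h1, h2⟩ := hR F S hFS
  constructor
  · intro ms hms
    obtain ⟨hnv, hb⟩ := h1 ms hms
    refine ⟨hnv, fun m Tp Tres S' hmem => ?_⟩
    obtain ⟨F', hb', hr⟩ := hb m Tp Tres S' hmem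
    exact ⟨F', hb', R, hR, hr⟩
  · intro ls hls
    obtain ⟨fs, hfs, hv⟩ := h2 ls hls
    refine ⟨fs, hfs, fun l Fl hmem => ?_⟩
    obtain ⟨Sl, hs, hr⟩ := hv l Fl hmem
    exact ⟨Sl, hs, R, hR, hr⟩

lemma consistent_variant {Ty : Type}
    {Body : String → Ty0 → Ty0 → FieldTyping Ty → FieldTyping Ty → Prop}
    {F' : FieldTyping Ty} {C : Sess} (hFC : Consistent Body F' C) (E : List String) :
    Consistent Body (FieldTyping.variant (E.map fun l => (l, F')))
      (Sess.variant (E.map fun l => (l, C))) := by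
  refine ⟨fun F S => Consistent Body F S ∨
    (F = FieldTyping.variant (E.map fun l => (l, F')) ∧
     S = Sess.variant (E.map fun l => (l, C))), ?_, Or.inr ⟨rfl, rfl⟩⟩
  intro F S h
  rcases h with h | ⟨hF, hS⟩
  · obtain ⟨h1, h2⟩ := isConsistency_consistent Body F S h
    constructor
    · intro ms hms
      obtain ⟨hnv, hb⟩ := h1 ms hms
      refine ⟨hnv, fun m Tp Tres S' hmem => ?_⟩
      obtain ⟨Fx, hb', hr⟩ := hb m Tp Tres S' hmem
      exact ⟨Fx, hb', Or.inl hr⟩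
    · intro ls hls
      obtain ⟨fs, hfs, hv⟩ := h2 ls hls
      refine ⟨fs, hfs, fun l Fl hmem => ?_⟩
      obtain ⟨Sl, hs, hr⟩ := hv l Fl hmem
      exact ⟨Sl, hs, Or.inl hr⟩
  · subst hF hS
    constructor
    · intro ms hms; simp at hms
    · intro ls hls
      refine ⟨E.map fun l => (l, F'), rfl, fun l Fl hmem => ?_⟩
      obtain ⟨l', hl', heq⟩ := List.mem_map.mp hmem
      obtain ⟨rfl, rfl⟩ := Prod.mk.injEq .. ▸ heq
      injection hls with hls
      refine ⟨C, ?_, Or.inl hFC⟩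
      rw [← hls]
      exact List.mem_map.mpr ⟨l', hl', rfl⟩

/-- Soundness of subtyping for sessions (Proposition `subsess`). -/
theorem consistency_preserved_by_session_subtyping {Ty : Type}
    (Body : String → Ty0 → Ty0 → FieldTyping Ty → FieldTyping Ty → Prop)
    (hsub : ∀ m T T' U U' F F', Body m T U F F' → TySub T' T → TySub U U' →
      Body m T' U' F F')
    (hvarf : ∀ m T E F F', Body m T (Ty0.enum E) F F' →
      Body m T Ty0.linkthis F (FieldTyping.variant (E.map fun l => (l, F'))))
    (F : FieldTyping Ty) (S S' : Sess)
    (hcons : Consistent Body F S) (hS : SessSub S S') :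
    Consistent Body F S' := by
  refine ⟨fun F S' => ∃ S, Consistent Body F S ∧ SessSub S S', ?_, S, hcons, hS⟩
  clear hcons hS F S S'
  intro F S' ⟨S, hc, hs⟩
  obtain ⟨hb', hv'⟩ := isSessSub_sessSub S S' hs
  constructor
  · intro ms' hms'
    obtain ⟨ms, rfl, hb⟩ := hb' ms' hms'
    obtain ⟨hc1, hc2⟩ := isConsistency_consistent Body F _ hc
    obtain ⟨hnv, hbody⟩ := hc1 ms rfl
    refine ⟨hnv, fun m T' U' C' hmem => ?_⟩
    obtain ⟨T, U, C, hmem', hT, hrest⟩ := hb m T' U' C' hmem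
    obtain ⟨F', hBody, hcC⟩ := hbody m T U C hmem'
    rcases hrest with ⟨hU, hr⟩ | ⟨E, rfl, rfl, hr⟩
    · exact ⟨F', hsub m T T' U U' F F' hBody hT hU, C, hcC, hr⟩
    · refine ⟨FieldTyping.variant (E.map fun l => (l, F')),
        hsub m T T' _ _ F _ (hvarf m T E F F' hBody) hT TySub.linkthis,
        Sess.variant (E.map fun l => (l, C)), consistent_variant hcC E, hr⟩
  · intro ls' hls'
    obtain ⟨ls, rfl, hv⟩ := hv' ls' hls'
    obtain ⟨_, hc2⟩ := isConsistency_consistent Body F _ hc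
    obtain ⟨fs, hfs, hvf⟩ := hc2 ls rfl
    refine ⟨fs, hfs, fun l Fl hmem => ?_⟩
    obtain ⟨Sl, hSl, hcl⟩ := hvf l Fl hmem
    obtain ⟨Sl', hSl', hr⟩ := hv l Sl hSl
    exact ⟨Sl', hSl', Sl, hcl, hr⟩
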